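/- (Estimate (2.15), proof of Theorem 2.1.) Let λ > 0 and let v : ℝ² → ℝ be measurable with x ↦ |x|·v(x) in L²(ℝ²). For f ∈ L²(S¹), where S¹ ⊂ ℝ² is the unit circle with arc-length measure, define g(x) := v(x)·(1/(2√2·π))·∫_{S¹} (e^{−i√λ·ν·x} − 1)·f(ν) dν for x ∈ ℝ². Then g ∈ L²(ℝ²) and ‖g‖_{L²(ℝ²)} ≤ (√λ/(2√π))·‖ |x|·v ‖_{L²(ℝ²)}·‖f‖_{L²(S¹)}. -/

import Mathlib

open MeasureTheory

noncomputable abbrev R2 : Type := EuclideanSpace ℝ (Fin 2)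

/-!
Since `|e^{it} - 1| ≤ |t|` and `|ν · x| ≤ |x|` for a unit vector `ν`, the kernel of the
angular integral is bounded by `√λ |x|`.  By Cauchy–Schwarz on the circle,
`∫ |f| ≤ √(2π) ‖f‖₂`, so `|g x| ≤ (√λ / (2√π)) ‖f‖₂ · |x| |v x|` pointwise, and the
estimate follows by taking `L²` norms in `x`.
-/

open Set Real

section FiniteMeasure

variable {α : Type*} [MeasurableSpace α] {μ : Measure α} [IsFiniteMeasure μ]

theorem integral_norm_le_sqrt_measureReal_univ_mul {E : Type*} [NormedAddCommGroup E]
    {f : α → E} (hf : MemLp f 2 μ) :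
    ∫ a, ‖f a‖ ∂μ ≤ √(μ.real univ) * (eLpNorm f 2 μ).toReal := by
  have h := eLpNorm_le_eLpNorm_mul_rpow_measure_univ (μ := μ) one_le_two hf.1
  rw [eLpNorm_one_eq_lintegral_enorm] at h
  rw [integral_norm_eq_lintegral_enorm hf.1, Real.sqrt_eq_rpow, measureReal_def,
    ENNReal.toReal_rpow, mul_comm, ← ENNReal.toReal_mul]
  refine ENNReal.toReal_mono (by finiteness) (h.trans_eq ?_)
  norm_num

theorem norm_integral_mul_le_of_norm_le {𝕜 : Type*} [RCLike 𝕜] {K f : α → 𝕜} {M : ℝ}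
    (hM : 0 ≤ M) (hK : ∀ a, ‖K a‖ ≤ M) (hf : MemLp f 2 μ) :
    ‖∫ a, K a * f a ∂μ‖ ≤ M * √(μ.real univ) * (eLpNorm f 2 μ).toReal :=
  calc ‖∫ a, K a * f a ∂μ‖
      ≤ ∫ a, ‖K a * f a‖ ∂μ := norm_integral_le_integral_norm _
    _ ≤ ∫ a, M * ‖f a‖ ∂μ := by
        refine integral_mono_of_nonneg (.of_forall fun _ ↦ norm_nonneg _)
          ((hf.integrable one_le_two).norm.const_mul M) (.of_forall fun a ↦ ?_)
        dsimp only
        rw [norm_mul]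
        exact mul_le_mul_of_nonneg_right (hK a) (norm_nonneg _)
    _ = M * ∫ a, ‖f a‖ ∂μ := integral_const_mul M _
    _ ≤ M * √(μ.real univ) * (eLpNorm f 2 μ).toReal := by
        rw [mul_assoc]
        exact mul_le_mul_of_nonneg_left (integral_norm_le_sqrt_measureReal_univ_mul hf) hM

end FiniteMeasure

theorem MeasureTheory.AEStronglyMeasurable.integral_kernel_mul {X Y 𝕜 : Type*}
    [MeasurableSpace X] [MeasurableSpace Y] [RCLike 𝕜] {ν : Measure X} {μ : Measure Y}
    [SFinite ν] [SFinite μ] {K : X × Y → 𝕜} (hK : AEStronglyMeasurable K (ν.prod μ))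
    {f : Y → 𝕜} (hf : AEStronglyMeasurable f μ) :
    AEStronglyMeasurable (fun x ↦ ∫ y, K (x, y) * f y ∂μ) ν :=
  (hK.mul hf.comp_snd).integral_prod_right'

theorem MeasureTheory.MemLp.of_le_mul_and_toReal_eLpNorm_le {α E F : Type*}
    [MeasurableSpace α] {μ : Measure α} [NormedAddCommGroup E] [NormedAddCommGroup F]
    {p : ENNReal} {f : α → E} {g : α → F} {c : ℝ} (hg : MemLp g p μ)
    (hf : AEStronglyMeasurable f μ) (hc : 0 ≤ c) (hfg : ∀ᵐ a ∂μ, ‖f a‖ ≤ c * ‖g a‖) :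
    MemLp f p μ ∧ (eLpNorm f p μ).toReal ≤ c * (eLpNorm g p μ).toReal := by
  refine ⟨hg.of_le_mul hf hfg, ?_⟩
  rw [← ENNReal.toReal_ofReal hc, ← ENNReal.toReal_mul]
  exact ENNReal.toReal_mono (by finiteness) (eLpNorm_le_mul_eLpNorm_of_ae_le_mul hfg p)

theorem abs_cos_mul_add_sin_mul_le_norm (θ : ℝ) (x : R2) :
    |cos θ * x 0 + sin θ * x 1| ≤ ‖x‖ := by
  rw [EuclideanSpace.norm_eq, Fin.sum_univ_two]
  apply Real.abs_le_sqrt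
  simp only [Real.norm_eq_abs, sq_abs]
  nlinarith [sq_nonneg (cos θ * x 1 - sin θ * x 0), sin_sq_add_cos_sq θ]

theorem norm_exp_neg_I_mul_sub_one_le {s : ℝ} (hs : 0 ≤ s) (θ : ℝ) (x : R2) :
    ‖Complex.exp (-Complex.I * s * (cos θ * x 0 + sin θ * x 1)) - 1‖ ≤ s * ‖x‖ := by
  have h := Real.norm_exp_I_mul_ofReal_sub_one_le (x := -(s * (cos θ * x 0 + sin θ * x 1)))
  rw [norm_neg, norm_mul, Real.norm_of_nonneg hs, Real.norm_eq_abs] at h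
  have harg : -Complex.I * s * (cos θ * x 0 + sin θ * x 1)
      = Complex.I * ((-(s * (cos θ * x 0 + sin θ * x 1)) : ℝ) : ℂ) := by
    push_cast; ring
  rw [harg]
  exact h.trans (mul_le_mul_of_nonneg_left (abs_cos_mul_add_sin_mul_le_norm θ x) hs)

section PlaneWave

variable {s : ℝ} {f : ℝ → ℂ}

theorem norm_integral_exp_sub_one_mul_le (hs : 0 ≤ s)
    (hf : MemLp f 2 (volume.restrict (Ioc 0 (2 * π)))) (x : R2) :
    ‖∫ θ in Ioc 0 (2 * π), (Complex.exp (-Complex.I * s * (cos θ * x 0 + sin θ * x 1)) - 1) * f θ‖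
      ≤ s * ‖x‖ * √(2 * π) * (eLpNorm f 2 (volume.restrict (Ioc 0 (2 * π)))).toReal := by
  have hμ : (volume.restrict (Ioc 0 (2 * π))).real univ = 2 * π := by simp [pi_pos.le]
  simpa only [hμ] using norm_integral_mul_le_of_norm_le (by positivity)
    (fun θ ↦ norm_exp_neg_I_mul_sub_one_le hs θ x) hf

theorem aestronglyMeasurable_integral_exp_sub_one_mul
    (hf : AEStronglyMeasurable f (volume.restrict (Ioc 0 (2 * π)))) :
    AEStronglyMeasurable (fun x : R2 ↦ ∫ θ in Ioc 0 (2 * π),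
      (Complex.exp (-Complex.I * s * (cos θ * x 0 + sin θ * x 1)) - 1) * f θ) volume :=
  AEStronglyMeasurable.integral_kernel_mul (K := fun p : R2 × ℝ ↦
      Complex.exp (-Complex.I * s * (cos p.2 * p.1 0 + sin p.2 * p.1 1)) - 1)
    (by fun_prop : Continuous _).aestronglyMeasurable hf

end PlaneWave

theorem one_div_two_sqrt_two_pi_mul_sqrt_two_pi :
    1 / (2 * √2 * π) * √(2 * π) = 1 / (2 * √π) := by
  rw [sqrt_mul zero_le_two]
  field_simp
  exact sq_sqrt pi_pos.le

/-- The circle `S¹` with arc-length measure is parametrized by the angle `θ ∈ (0, 2π]`,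
so that `ν = (cos θ, sin θ)` and `L²(S¹)` is realized as `L²((0, 2π])`. -/
theorem trace_operator_low_energy_bound (lam : ℝ)
    (v : R2 → ℝ) (hv : Measurable v)
    (hvx : MemLp (fun x : R2 => ‖x‖ * v x) 2 volume)
    (f : ℝ → ℂ) (hf : MemLp f 2 (volume.restrict (Set.Ioc 0 (2 * Real.pi)))) :
    MemLp (fun x : R2 =>
        (v x : ℂ) * (1 / (2 * Real.sqrt 2 * Real.pi)) *
          ∫ θ in Set.Ioc 0 (2 * Real.pi),
            (Complex.exp (-Complex.I * Real.sqrt lam *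
                (Real.cos θ * x 0 + Real.sin θ * x 1)) - 1) * f θ) 2 volume ∧
    (eLpNorm (fun x : R2 =>
        (v x : ℂ) * (1 / (2 * Real.sqrt 2 * Real.pi)) *
          ∫ θ in Set.Ioc 0 (2 * Real.pi),
            (Complex.exp (-Complex.I * Real.sqrt lam *
                (Real.cos θ * x 0 + Real.sin θ * x 1)) - 1) * f θ) 2 volume).toReal ≤
      Real.sqrt lam / (2 * Real.sqrt Real.pi) *
        (eLpNorm (fun x : R2 => ‖x‖ * v x) 2 volume).toReal *
        (eLpNorm f 2 (volume.restrict (Set.Ioc 0 (2 * Real.pi)))).toReal := by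
  set Nf := (eLpNorm f 2 (volume.restrict (Ioc 0 (2 * π)))).toReal
  have hc : ‖(1 / (2 * √2 * π) : ℂ)‖ = 1 / (2 * √2 * π) := by
    exact_mod_cast Complex.norm_of_nonneg (r := 1 / (2 * √2 * π)) (by positivity)
  have hpointwise : ∀ x : R2, ‖(v x : ℂ) * (1 / (2 * √2 * π)) * ∫ θ in Ioc 0 (2 * π),
      (Complex.exp (-Complex.I * √lam * (cos θ * x 0 + sin θ * x 1)) - 1) * f θ‖
      ≤ √lam / (2 * √π) * Nf * ‖‖x‖ * v x‖ := fun x ↦ by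
    rw [norm_mul, norm_mul, hc, Complex.norm_real, norm_mul, norm_norm,
      div_eq_mul_one_div _ (2 * √π), ← one_div_two_sqrt_two_pi_mul_sqrt_two_pi]
    calc _ ≤ ‖v x‖ * (1 / (2 * √2 * π)) * (√lam * ‖x‖ * √(2 * π) * Nf) := by
          gcongr; exact norm_integral_exp_sub_one_mul_le (sqrt_nonneg lam) hf x
      _ = _ := by ring
  obtain ⟨hmem, hnorm⟩ := hvx.of_le_mul_and_toReal_eLpNorm_le
    (((Complex.measurable_ofReal.comp hv).aestronglyMeasurable.mul_const _).mul
      (aestronglyMeasurable_integral_exp_sub_one_mul hf.1))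
    (by positivity) (.of_forall hpointwise)
  exact ⟨hmem, hnorm.trans_eq (by ring)⟩
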